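/- Let λ > -1/2 and μ > 0, and define the even orthonormal generalized Gegenbauer polynomial C̃_{2n}^{(λ,μ)}(t) = ã_{2n}^{(λ,μ)} P_n^{(λ-1/2, μ-1/2)}(2t² - 1) with ã_{2n}^{(λ,μ)} = ((2n+λ+μ) Γ(n+1) Γ(n+λ+μ) / (Γ(n+λ+1/2) Γ(n+μ+1/2)))^{1/2}. Then max_{t ∈ [-1,1]} |C̃_{2n}^{(λ,μ)}(t)| ≍ n^{max(λ,μ)} as n → ∞. -/

import Mathlib

open Real Set

/-- Jacobi polynomial `P_n^{(a,b)}` in the standard normalization. -/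
noncomputable def jacobiP (a b : ℝ) (n : ℕ) (x : ℝ) : ℝ :=
  (Nat.factorial n : ℝ)⁻¹ *
    ∑ k ∈ Finset.range (n + 1),
      (Nat.choose n k : ℝ) * (ascPochhammer ℝ k).eval ((n : ℝ) + a + b + 1) *
        (ascPochhammer ℝ (n - k)).eval (a + (k : ℝ) + 1) * ((x - 1) / 2) ^ k

/-- Pochhammer symbol `(q)_n` for real `q`. -/
noncomputable def poch (q : ℝ) (n : ℕ) : ℝ := (ascPochhammer ℝ n).eval q

/-- Normalization constant for even orthonormal generalized Gegenbauer polynomials. -/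
noncomputable def atilde2n (l m : ℝ) (n : ℕ) : ℝ :=
  (((2 * n + l + m) * Real.Gamma (n + 1) * Real.Gamma (n + l + m)) /
    (Real.Gamma (n + l + 1 / 2) * Real.Gamma (n + m + 1 / 2))) ^ ((1 : ℝ) / 2)

/-! The endpoint values are explicit: `P_n^{(a,b)}(1) = (a+1)_n / n!` and, by Chu–Vandermonde,
`P_n^{(a,b)}(-1) = (-1)^n P_n^{(b,a)}(1)`. Euler's limit formula for `Γ` gives
`Γ(n + c) ~ n^c Γ(n)`, so these values are of order `n^a` and `n^b`, and `ã_{2n}` is of order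
`n^{1/2}`. For `b > -1/2` the maximum of `|P_n^{(a,b)}|` on `[-1, 1]` is attained at an endpoint:
by the Jacobi differential equation, Sonine's function `n(n+a+b+1) P² + (1 - x²) P'²` has
derivative `2 P'² ((a - b) + (a + b + 1) x)`, which changes sign at most once, from `-` to `+`,
on `[-1, 1]`, and it agrees with `n(n+a+b+1) P²` at `±1`. As `t ↦ 2t² - 1` maps `[-1, 1]`
onto `[-1, 1]`, the maximum is `ã_{2n} max(|P(-1)|, |P(1)|) ≍ n^{1/2 + max(a, b)}`,
and `1/2 + max(a, b) = max(λ, μ)` for `a = λ - 1/2`, `b = μ - 1/2`. -/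

open Finset Filter Asymptotics Topology

lemma poch_succ (q : ℝ) (n : ℕ) : poch q (n + 1) = poch q n * (q + n) := by
  simp [poch, ascPochhammer_succ_eval]

lemma poch_succ_left (q : ℝ) (n : ℕ) : poch q (n + 1) = q * poch (q + 1) n := by
  simp [poch, ascPochhammer_succ_left, Polynomial.eval_comp]

lemma poch_eq_prod (q : ℝ) (n : ℕ) : poch q n = ∏ j ∈ range n, (q + j) := by
  induction n with
  | zero => simp [poch]
  | succ n ih => rw [poch_succ, ih, prod_range_succ]

lemma poch_neg (r : ℝ) (k : ℕ) : poch (-r) k = (-1) ^ k * poch (r - k + 1) k := by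
  rw [poch, poch, ascPochhammer_eval_neg_eq_descPochhammer, descPochhammer_eval_eq_ascPochhammer]

lemma poch_vandermonde (r s : ℝ) (n : ℕ) :
    poch (r + s - n + 1) n = ∑ k ∈ range (n + 1),
      (n.choose k : ℝ) * (poch (r - k + 1) k * poch (s - (n - k : ℕ) + 1) (n - k)) := by
  have h := Ring.descPochhammer_smeval_add n (Commute.all r s)
  simp only [Polynomial.descPochhammer_smeval_eq_ascPochhammer,
    Polynomial.ascPochhammer_smeval_eq_eval] at h
  exact h.trans (Nat.sum_antidiagonal_eq_sum_range_succ
    (fun i j => (n.choose i : ℝ) * (poch (r - i + 1) i * poch (s - j + 1) j)) n)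

lemma Gamma_add_nat_eq_poch_mul {q : ℝ} (hq : 0 < q) (n : ℕ) :
    Gamma (q + n) = poch q n * Gamma q := by
  induction n with
  | zero => simp [poch]
  | succ n ih =>
    rw [Nat.cast_succ, ← add_assoc, Gamma_add_one (by positivity), ih, poch_succ]
    ring

lemma GammaSeq_eq_div_Gamma {s : ℝ} (hs : 0 < s) (n : ℕ) :
    GammaSeq s n = n ^ s * n.factorial * Gamma s / Gamma (s + (n + 1)) := by
  have := Gamma_add_nat_eq_poch_mul hs (n + 1)
  push_cast at this
  rw [GammaSeq, ← poch_eq_prod, this, mul_div_mul_right _ _ (Gamma_pos_of_pos hs).ne']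

lemma tendsto_Gamma_nat_add_div_of_pos {c : ℝ} (hc : 0 < c) :
    Tendsto (fun n : ℕ => Gamma (n + c) / (n ^ c * Gamma n)) atTop (𝓝 1) := by
  have hΓc := (Gamma_pos_of_pos hc).ne'
  have hlim : Tendsto (fun n : ℕ => Gamma c / GammaSeq c n * (n / (n + c))) atTop (𝓝 1) := by
    simpa [hΓc] using
      ((tendsto_const_nhds (x := Gamma c)).div (GammaSeq_tendsto_Gamma c) hΓc).mul
        (tendsto_natCast_div_add_atTop c)
  refine hlim.congr' ((eventually_gt_atTop 0).mono fun n hn => ?_)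
  have hn' : (0 : ℝ) < n := by exact_mod_cast hn
  have hfact : (n.factorial : ℝ) = n * Gamma n := by
    rw [← Gamma_nat_eq_factorial, Gamma_add_one hn'.ne']
  have hΓn := (Gamma_pos_of_pos hn').ne'
  have hΓnc := (Gamma_pos_of_pos (by positivity : (0:ℝ) < n + c)).ne'
  rw [GammaSeq_eq_div_Gamma hc, ← add_assoc, Gamma_add_one (by positivity), hfact, add_comm c]
  field_simp

lemma tendsto_Gamma_nat_add_div (c : ℝ) :
    Tendsto (fun n : ℕ => Gamma (n + c) / (n ^ c * Gamma n)) atTop (𝓝 1) := by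
  obtain ⟨k, hk⟩ := exists_nat_gt (-c)
  induction k generalizing c with
  | zero => exact tendsto_Gamma_nat_add_div_of_pos (by simpa using hk)
  | succ k ih =>
    have hlim := (ih (c + 1) (by push_cast at hk; linarith)).mul
      (tendsto_natCast_div_add_atTop c)
    rw [one_mul] at hlim
    refine hlim.congr' ((eventually_gt_atTop ⌈-c⌉₊).mono fun n hn => ?_)
    have hnc : (0 : ℝ) < n + c := by
      have := Nat.lt_of_ceil_lt hn
      linarith
    have hn' : (0 : ℝ) < n := by linarith [Nat.le_ceil (-c), (Nat.cast_lt (α := ℝ)).2 hn]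
    have hΓn := (Gamma_pos_of_pos hn').ne'
    have hΓnc := (Gamma_pos_of_pos hnc).ne'
    rw [← add_assoc, Gamma_add_one hnc.ne', rpow_add_one hn'.ne']
    field_simp

theorem isEquivalent_Gamma_nat_add (c : ℝ) :
    (fun n : ℕ => Gamma (n + c)) ~[atTop] fun n => (n : ℝ) ^ c * Gamma n :=
  isEquivalent_of_tendsto_one (tendsto_Gamma_nat_add_div c)

lemma jacobiP_one (a b : ℝ) (n : ℕ) : jacobiP a b n 1 = poch (a + 1) n / n.factorial := by
  rw [jacobiP, sum_eq_single_of_mem 0 (by simp)]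
  · simp [poch, div_eq_inv_mul]
  · intro k _ hk
    simp [hk]

lemma jacobiP_neg_one (a b : ℝ) (n : ℕ) :
    jacobiP a b n (-1) = (-1) ^ n * jacobiP b a n 1 := by
  have h := poch_vandermonde (-(n + a + b + 1)) (a + n) n
  rw [show -(n + a + b + 1) + (a + n) - n + 1 = -(n + b) by ring, poch_neg,
    show (n : ℝ) + b - n + 1 = b + 1 by ring] at h
  rw [jacobiP_one, mul_div_assoc', h, jacobiP, inv_mul_eq_div]
  congr 1
  refine Finset.sum_congr rfl fun k hk => ?_
  have hk : k ≤ n := Nat.lt_succ_iff.mp (mem_range.mp hk)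
  rw [show -(n + a + b + 1) - k + 1 = -((n : ℝ) + a + b + k) by ring, poch_neg,
    Nat.cast_sub hk, show (n : ℝ) + a + b + k - k + 1 = n + a + b + 1 by ring,
    show a + n - (n - k) + 1 = a + k + 1 by ring]
  norm_num [poch]
  ring

lemma jacobiP_one_eq_Gamma {a : ℝ} (ha : -1 < a) (b : ℝ) (n : ℕ) :
    jacobiP a b n 1 = Gamma (n + (a + 1)) / (Gamma (a + 1) * Gamma (n + 1)) := by
  rw [jacobiP_one, Gamma_nat_eq_factorial, add_comm (n : ℝ),
    Gamma_add_nat_eq_poch_mul (by linarith), mul_comm (Gamma (a + 1)),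
    mul_div_mul_right _ _ (Gamma_pos_of_pos (by linarith)).ne']

theorem isEquivalent_jacobiP_one {a : ℝ} (ha : -1 < a) (b : ℝ) :
    (fun n : ℕ => jacobiP a b n 1) ~[atTop] fun n => (n : ℝ) ^ a / Gamma (a + 1) := by
  have h := (isEquivalent_Gamma_nat_add (a + 1)).div
    ((IsEquivalent.refl (u := fun _ => Gamma (a + 1))).mul (isEquivalent_Gamma_nat_add 1))
  refine (h.congr_left (.of_eq (funext fun n => (jacobiP_one_eq_Gamma ha b n).symm))).congr_right
    ?_
  filter_upwards [eventually_gt_atTop 0] with n hn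
  have hn' : (0 : ℝ) < n := by exact_mod_cast hn
  have hΓn := (Gamma_pos_of_pos hn').ne'
  simp only [Pi.div_apply, Pi.mul_apply]
  rw [rpow_add_one hn'.ne', rpow_one]
  field_simp

lemma isEquivalent_atilde2n_sq (l m : ℝ) :
    (fun n : ℕ => (2 * n + l + m) * Gamma (n + 1) * Gamma (n + l + m) /
      (Gamma (n + l + 1 / 2) * Gamma (n + m + 1 / 2))) ~[atTop] fun n => 2 * (n : ℝ) := by
  have hnorm : Tendsto (norm ∘ fun n : ℕ => 2 * (n : ℝ)) atTop atTop :=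
    tendsto_norm_atTop_atTop.comp (tendsto_natCast_atTop_atTop.const_mul_atTop two_pos)
  have hlin : (fun n : ℕ => 2 * (n : ℝ) + l + m) ~[atTop] fun n => 2 * (n : ℝ) :=
    (IsEquivalent.refl.add_const_of_norm_tendsto_atTop hnorm).add_const_of_norm_tendsto_atTop
      hnorm
  have h := ((hlin.mul (isEquivalent_Gamma_nat_add 1)).mul
    (isEquivalent_Gamma_nat_add (l + m))).div
    ((isEquivalent_Gamma_nat_add (l + 1 / 2)).mul (isEquivalent_Gamma_nat_add (m + 1 / 2)))
  simp only [← add_assoc] at h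
  refine h.congr_right ?_
  filter_upwards [eventually_gt_atTop 0] with n hn
  have hn' : (0 : ℝ) < n := by exact_mod_cast hn
  have hΓn := (Gamma_pos_of_pos hn').ne'
  have hpow : (n : ℝ) ^ (l + 1 / 2) * (n : ℝ) ^ (m + 1 / 2) = n ^ (l + m) * n ^ (1 : ℝ) := by
    rw [← rpow_add hn', ← rpow_add hn']
    ring_nf
  simp only [Pi.div_apply, Pi.mul_apply]
  rw [mul_mul_mul_comm ((n : ℝ) ^ (l + 1 / 2)), hpow]
  field_simp

theorem isTheta_atilde2n (l m : ℝ) :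
    (fun n : ℕ => atilde2n l m n) =Θ[atTop] fun n => (n : ℝ) ^ (1 / 2 : ℝ) := by
  have h := isEquivalent_atilde2n_sq l m
  have hpos : ∀ᶠ n : ℕ in atTop, (0 : ℝ) < 2 * n :=
    (eventually_gt_atTop 0).mono fun n hn => by positivity
  have hsqrt := h.isTheta.rpow (r := 1 / 2) ((h.eventually_pos hpos).mono fun _ => le_of_lt)
    (hpos.mono fun _ => le_of_lt)
  have hsplit : (fun n : ℕ => (2 * (n : ℝ)) ^ (1 / 2 : ℝ)) =
      fun n : ℕ => (2 : ℝ) ^ (1 / 2 : ℝ) * (n : ℝ) ^ (1 / 2 : ℝ) :=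
    funext fun n => mul_rpow zero_le_two n.cast_nonneg
  refine hsqrt.trans ?_
  rw [hsplit, isTheta_const_mul_left (by positivity)]
  exact isTheta_rfl

section JacobiODE

variable (a b : ℝ) (n : ℕ)

noncomputable def jacobiCoeff (k : ℕ) : ℝ :=
  n.choose k * poch (n + a + b + 1) k * poch (a + k + 1) (n - k)

noncomputable def jacobiPDeriv (x : ℝ) : ℝ :=
  (n.factorial : ℝ)⁻¹ *
    ∑ k ∈ range (n + 1), jacobiCoeff a b n k * (k * ((x - 1) / 2) ^ (k - 1) / 2)

noncomputable def jacobiPDeriv2 (x : ℝ) : ℝ :=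
  (n.factorial : ℝ)⁻¹ * ∑ k ∈ range (n + 1),
    jacobiCoeff a b n k * (k * (k - 1 : ℕ) * ((x - 1) / 2) ^ (k - 1 - 1) / 4)

lemma jacobiP_eq_sum (x : ℝ) :
    jacobiP a b n x =
      (n.factorial : ℝ)⁻¹ * ∑ k ∈ range (n + 1), jacobiCoeff a b n k * ((x - 1) / 2) ^ k :=
  rfl

lemma hasDerivAt_jacobiP (x : ℝ) : HasDerivAt (jacobiP a b n) (jacobiPDeriv a b n x) x := by
  have hu : HasDerivAt (fun x : ℝ => (x - 1) / 2) (1 / 2) x :=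
    ((hasDerivAt_id x).sub_const 1).div_const 2
  have h := (HasDerivAt.fun_sum (u := range (n + 1)) fun k _ =>
    (hu.pow k).const_mul (jacobiCoeff a b n k)).const_mul (n.factorial : ℝ)⁻¹
  refine (h.congr_deriv ?_).congr_of_eventuallyEq (.of_forall (jacobiP_eq_sum a b n))
  unfold jacobiPDeriv
  congr 1
  refine Finset.sum_congr rfl fun k _ => ?_
  ring

lemma hasDerivAt_jacobiPDeriv (x : ℝ) :
    HasDerivAt (jacobiPDeriv a b n) (jacobiPDeriv2 a b n x) x := by
  have hu : HasDerivAt (fun x : ℝ => (x - 1) / 2) (1 / 2) x :=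
    ((hasDerivAt_id x).sub_const 1).div_const 2
  have h := (HasDerivAt.fun_sum (u := range (n + 1)) fun k _ =>
    (((hu.pow (k - 1)).const_mul (k : ℝ)).div_const 2).const_mul (jacobiCoeff a b n k)).const_mul
    (n.factorial : ℝ)⁻¹
  refine h.congr_deriv ?_
  unfold jacobiPDeriv2
  congr 1
  refine Finset.sum_congr rfl fun k _ => ?_
  ring

lemma jacobiCoeff_succ {k : ℕ} (hk : k < n) :
    (k + 1) * (a + k + 1) * jacobiCoeff a b n (k + 1) =
      (n - k) * (n + k + a + b + 1) * jacobiCoeff a b n k := by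
  obtain ⟨j, hj⟩ : ∃ j, n - k = j + 1 := ⟨n - k - 1, by omega⟩
  have hchoose : (n.choose (k + 1) : ℝ) * (k + 1) = n.choose k * (n - k) := by
    have := Nat.choose_succ_right_eq n k
    rw [← Nat.cast_sub hk.le]
    exact_mod_cast this
  unfold jacobiCoeff
  rw [show n - (k + 1) = j by omega, hj, poch_succ, poch_succ_left,
    show a + ((k + 1 : ℕ) : ℝ) + 1 = a + k + 1 + 1 by push_cast; ring]
  linear_combination (a + k + 1) * (n + a + b + 1 + k) * poch (n + a + b + 1) k *
    poch (a + k + 1 + 1) j * hchoose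

lemma sum_jacobiCoeff_telescope (u : ℝ) :
    ∑ k ∈ range (n + 1),
        (n * (n + a + b + 1) - k * (k + a + b + 1)) * jacobiCoeff a b n k * u ^ k =
      ∑ k ∈ range (n + 1), k * (k + a) * jacobiCoeff a b n k * u ^ (k - 1) := by
  rw [sum_range_succ, sum_range_succ']
  simp only [sub_self, zero_mul, add_zero, Nat.cast_zero]
  refine Finset.sum_congr rfl fun k hk => ?_
  have h := jacobiCoeff_succ a b n (mem_range.mp hk)
  rw [Nat.add_sub_cancel]
  push_cast
  linear_combination (-u ^ k) * h

lemma jacobiP_ode (x : ℝ) :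
    (1 - x ^ 2) * jacobiPDeriv2 a b n x + (b - a - (a + b + 2) * x) * jacobiPDeriv a b n x +
      n * (n + a + b + 1) * jacobiP a b n x = 0 := by
  rw [jacobiP_eq_sum, jacobiPDeriv, jacobiPDeriv2]
  set u := (x - 1) / 2
  have hx : x = 2 * u + 1 := by simp only [u]; ring
  have hterm : ∀ k : ℕ,
      (1 - x ^ 2) * (jacobiCoeff a b n k * (k * (k - 1 : ℕ) * u ^ (k - 1 - 1) / 4)) +
        (b - a - (a + b + 2) * x) * (jacobiCoeff a b n k * (k * u ^ (k - 1) / 2)) +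
        n * (n + a + b + 1) * (jacobiCoeff a b n k * u ^ k) =
      (n * (n + a + b + 1) - k * (k + a + b + 1)) * jacobiCoeff a b n k * u ^ k -
        k * (k + a) * jacobiCoeff a b n k * u ^ (k - 1) := by
    rintro (_ | _ | k)
    · simp
    · simp only [hx]; push_cast; ring
    · simp only [hx, Nat.add_sub_cancel]; push_cast; ring
  have hcomb := sum_jacobiCoeff_telescope a b n u
  rw [← sub_eq_zero, ← sum_sub_distrib] at hcomb
  simp only [← hterm, sum_add_distrib, ← mul_sum] at hcomb
  linear_combination (n.factorial : ℝ)⁻¹ * hcomb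

end JacobiODE

lemma le_max_of_deriv_nonpos_of_deriv_nonneg {f : ℝ → ℝ} {a b c x : ℝ}
    (hf : Differentiable ℝ f) (hleft : ∀ y ∈ Set.Ioo a c, deriv f y ≤ 0)
    (hright : ∀ y ∈ Set.Ioo c b, 0 ≤ deriv f y) (hx : x ∈ Set.Icc a b) :
    f x ≤ max (f a) (f b) := by
  rcases le_or_gt x c with hxc | hcx
  · have hanti : AntitoneOn f (Icc a x) :=
      antitoneOn_of_deriv_nonpos (convex_Icc a x) hf.continuous.continuousOn
        hf.differentiableOn fun y hy => by
          rw [interior_Icc] at hy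
          exact hleft y ⟨hy.1, hy.2.trans_le hxc⟩
    exact le_max_of_le_left (hanti ⟨le_rfl, hx.1⟩ ⟨hx.1, le_rfl⟩ hx.1)
  · have hmono : MonotoneOn f (Icc x b) :=
      monotoneOn_of_deriv_nonneg (convex_Icc x b) hf.continuous.continuousOn
        hf.differentiableOn fun y hy => by
          rw [interior_Icc] at hy
          exact hright y ⟨hcx.trans hy.1, hy.2⟩
    exact le_max_of_le_right (hmono ⟨le_rfl, hx.2⟩ ⟨hx.2, le_rfl⟩ hx.2)

section Sonine

variable (a b : ℝ) (n : ℕ)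

noncomputable def sonine (x : ℝ) : ℝ :=
  n * (n + a + b + 1) * jacobiP a b n x ^ 2 + (1 - x ^ 2) * jacobiPDeriv a b n x ^ 2

lemma hasDerivAt_sonine (x : ℝ) :
    HasDerivAt (sonine a b n) (2 * jacobiPDeriv a b n x ^ 2 * (a - b + (a + b + 1) * x)) x := by
  have h := (((hasDerivAt_jacobiP a b n x).pow 2).const_mul (n * (n + a + b + 1 : ℝ))).add
    (((hasDerivAt_pow 2 x).const_sub 1).mul ((hasDerivAt_jacobiPDeriv a b n x).pow 2))
  refine h.congr_deriv ?_
  simp only [Pi.pow_apply]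
  linear_combination 2 * jacobiPDeriv a b n x * jacobiP_ode a b n x

variable {a b n}

lemma sonine_le_max (hb : -(1 / 2) < b) {x : ℝ} (hx : x ∈ Set.Icc (-1) 1) :
    sonine a b n x ≤ max (sonine a b n (-1)) (sonine a b n 1) := by
  have hderiv y := (hasDerivAt_sonine a b n y).deriv
  have hdiff : Differentiable ℝ (sonine a b n) :=
    fun y => (hasDerivAt_sonine a b n y).differentiableAt
  rcases le_or_gt (a + b + 1) 0 with hs | hs
  · refine le_max_of_deriv_nonpos_of_deriv_nonneg (c := 1) hdiff (fun y hy => ?_)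
      (fun y hy => (lt_asymm hy.1 hy.2).elim) hx
    rw [hderiv]
    have : a - b + (a + b + 1) * y ≤ 0 := by nlinarith [hy.1]
    exact mul_nonpos_of_nonneg_of_nonpos (by positivity) this
  · refine le_max_of_deriv_nonpos_of_deriv_nonneg (c := (b - a) / (a + b + 1)) hdiff
      (fun y hy => ?_) (fun y hy => ?_) hx
    · rw [hderiv]
      have : a - b + (a + b + 1) * y ≤ 0 := by
        have := (lt_div_iff₀ hs).1 hy.2
        linarith
      exact mul_nonpos_of_nonneg_of_nonpos (by positivity) this
    · rw [hderiv]
      have : 0 ≤ a - b + (a + b + 1) * y := by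
        have := (div_lt_iff₀ hs).1 hy.1
        linarith
      positivity

theorem abs_jacobiP_le_max (hb : -(1 / 2) < b) (hN : 0 < n * (n + a + b + 1))
    {x : ℝ} (hx : x ∈ Set.Icc (-1) 1) :
    |jacobiP a b n x| ≤ max |jacobiP a b n (-1)| |jacobiP a b n 1| := by
  set M := max |jacobiP a b n (-1)| |jacobiP a b n 1|
  have hM : 0 ≤ M := (abs_nonneg _).trans (le_max_left _ _)
  have hsonine : n * (n + a + b + 1) * jacobiP a b n x ^ 2 ≤ sonine a b n x := by
    have : 0 ≤ (1 - x ^ 2) * jacobiPDeriv a b n x ^ 2 :=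
      mul_nonneg (by nlinarith [hx.1, hx.2]) (sq_nonneg _)
    simp only [sonine]
    linarith
  have hsq_le {y : ℝ} (hy : |y| ≤ M) : y ^ 2 ≤ M ^ 2 := sq_le_sq.2 (hy.trans (le_abs_self M))
  have hends : max (sonine a b n (-1)) (sonine a b n 1) ≤ n * (n + a + b + 1) * M ^ 2 := by
    simp only [sonine, neg_one_sq, one_pow, sub_self, zero_mul, add_zero]
    exact max_le (mul_le_mul_of_nonneg_left (hsq_le (le_max_left _ _)) hN.le)
      (mul_le_mul_of_nonneg_left (hsq_le (le_max_right _ _)) hN.le)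
  have hsq : jacobiP a b n x ^ 2 ≤ M ^ 2 :=
    le_of_mul_le_mul_left ((hsonine.trans (sonine_le_max hb hx)).trans hends) hN
  simpa [abs_of_nonneg hM] using sq_le_sq.1 hsq

end Sonine

lemma isGreatest_abs_mul_jacobiP_two_sq_sub_one {a b : ℝ} {n : ℕ} (hb : -(1 / 2) < b)
    (hN : 0 < n * (n + a + b + 1)) (c : ℝ) :
    IsGreatest ((fun t : ℝ => |c * jacobiP a b n (2 * t ^ 2 - 1)|) '' Set.Icc (-1) 1)
      (|c| * max |jacobiP a b n (-1)| |jacobiP a b n 1|) := by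
  constructor
  · rcases max_choice |jacobiP a b n (-1)| |jacobiP a b n 1| with h | h
    · exact ⟨0, by norm_num, by simp [h, abs_mul]⟩
    · exact ⟨1, by norm_num, by norm_num [h, abs_mul]⟩
  · rintro _ ⟨t, ht, rfl⟩
    have ht2 : t ^ 2 ≤ 1 := by nlinarith [ht.1, ht.2]
    dsimp only
    rw [abs_mul]
    exact mul_le_mul_of_nonneg_left
      (abs_jacobiP_le_max hb hN ⟨by nlinarith [sq_nonneg t], by linarith⟩) (abs_nonneg c)

theorem isTheta_jacobiP_one {a : ℝ} (ha : -1 < a) (b : ℝ) :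
    (fun n : ℕ => jacobiP a b n 1) =Θ[atTop] fun n => (n : ℝ) ^ a := by
  refine (isEquivalent_jacobiP_one ha b).isTheta.trans ?_
  simp only [div_eq_inv_mul]
  exact (isTheta_const_mul_left (inv_ne_zero (Gamma_pos_of_pos (by linarith)).ne')).2 isTheta_rfl

theorem isTheta_jacobiP_neg_one (a : ℝ) {b : ℝ} (hb : -1 < b) :
    (fun n : ℕ => jacobiP a b n (-1)) =Θ[atTop] fun n => (n : ℝ) ^ b := by
  refine (IsTheta.of_norm_eventuallyEq_norm (.of_forall fun n => ?_)).trans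
    (isTheta_jacobiP_one hb a)
  simp [jacobiP_neg_one]

lemma isBigO_natCast_rpow_rpow {b a : ℝ} (h : b ≤ a) :
    (fun n : ℕ => (n : ℝ) ^ b) =O[atTop] fun n => (n : ℝ) ^ a := by
  refine IsBigO.of_bound' ((eventually_ge_atTop 1).mono fun n hn => ?_)
  have hn' : (1 : ℝ) ≤ n := by exact_mod_cast hn
  rw [Real.norm_of_nonneg (by positivity), Real.norm_of_nonneg (by positivity)]
  exact rpow_le_rpow_of_exponent_le hn' h

lemma isTheta_max_abs_of_isBigO {α : Type*} {l : Filter α} {f g u : α → ℝ}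
    (hf : f =Θ[l] u) (hg : g =O[l] u) : (fun x => max |f x| |g x|) =Θ[l] u := by
  refine ⟨?_, hf.isBigO_symm.trans (isBigO_of_le _ fun x => ?_)⟩
  · refine (isBigO_of_le (g := fun x => |f x| + |g x|) _ fun x => ?_).trans
      ((isBigO_abs_left.2 hf.isBigO).add (isBigO_abs_left.2 hg))
    simp only [Real.norm_eq_abs, abs_of_nonneg (le_max_of_le_left (abs_nonneg (f x))),
      abs_of_nonneg (add_nonneg (abs_nonneg (f x)) (abs_nonneg (g x)))]
    exact max_le_add_of_nonneg (abs_nonneg _) (abs_nonneg _)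
  · simp only [Real.norm_eq_abs, abs_of_nonneg (le_max_of_le_left (abs_nonneg (f x)))]
    exact le_max_left _ _

lemma Asymptotics.IsTheta.exists_pos_bounds {α E F : Type*} [SeminormedAddCommGroup E]
    [SeminormedAddCommGroup F] {l : Filter α} {f : α → E} {g : α → F} (h : f =Θ[l] g) :
    ∃ C₁ C₂ : ℝ, 0 < C₁ ∧ 0 < C₂ ∧ ∀ᶠ x in l, C₁ * ‖g x‖ ≤ ‖f x‖ ∧ ‖f x‖ ≤ C₂ * ‖g x‖ := by
  obtain ⟨C₂, hC₂, h₂⟩ := h.isBigO.exists_pos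
  obtain ⟨c, hc, h₁⟩ := h.isBigO_symm.exists_pos
  refine ⟨c⁻¹, C₂, inv_pos.2 hc, hC₂, (h₁.bound.and h₂.bound).mono fun x hx => ⟨?_, hx.2⟩⟩
  rw [inv_mul_le_iff₀ hc]
  exact hx.1

theorem even_gegenbauer_max_asymp (l m : ℝ) (hl : -(1 / 2 : ℝ) < l) (hm : 0 < m) :
    ∃ C₁ C₂ : ℝ, 0 < C₁ ∧ 0 < C₂ ∧ ∃ n₀ : ℕ, ∀ n : ℕ, n₀ ≤ n →
      C₁ * (n : ℝ) ^ (max l m) ≤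
        sSup ((fun t : ℝ => |atilde2n l m n * jacobiP (l - 1 / 2) (m - 1 / 2) n (2 * t ^ 2 - 1)|) ''
          Set.Icc (-1) 1) ∧
      sSup ((fun t : ℝ => |atilde2n l m n * jacobiP (l - 1 / 2) (m - 1 / 2) n (2 * t ^ 2 - 1)|) ''
          Set.Icc (-1) 1) ≤ C₂ * (n : ℝ) ^ (max l m) := by
  have ha : -1 < l - 1 / 2 := by linarith
  have hb : -1 < m - 1 / 2 := by linarith
  have hends : (fun n : ℕ => max |jacobiP (l - 1 / 2) (m - 1 / 2) n (-1)|
      |jacobiP (l - 1 / 2) (m - 1 / 2) n 1|) =Θ[atTop] fun n => (n : ℝ) ^ (max l m - 1 / 2) := by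
    rcases le_total l m with hlm | hlm
    · rw [max_eq_right hlm]
      exact isTheta_max_abs_of_isBigO (isTheta_jacobiP_neg_one _ hb)
        ((isTheta_jacobiP_one ha _).isBigO.trans (isBigO_natCast_rpow_rpow (by linarith)))
    · rw [max_eq_left hlm, funext fun n => max_comm _ _]
      exact isTheta_max_abs_of_isBigO (isTheta_jacobiP_one ha _)
        ((isTheta_jacobiP_neg_one _ hb).isBigO.trans (isBigO_natCast_rpow_rpow (by linarith)))
  have hmax : (fun n : ℕ => atilde2n l m n * max |jacobiP (l - 1 / 2) (m - 1 / 2) n (-1)|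
      |jacobiP (l - 1 / 2) (m - 1 / 2) n 1|) =Θ[atTop] fun n => (n : ℝ) ^ (max l m) :=
    ((isTheta_atilde2n l m).mul hends).trans_eventuallyEq
      ((eventually_gt_atTop 0).mono fun n hn => by
        simp only [← rpow_add (Nat.cast_pos.2 hn), add_sub_cancel])
  obtain ⟨C₁, C₂, hC₁, hC₂, hbounds⟩ := hmax.exists_pos_bounds
  obtain ⟨n₀, hn₀⟩ := eventually_atTop.1 (hbounds.and (eventually_gt_atTop 0))
  refine ⟨C₁, C₂, hC₁, hC₂, n₀, fun n hn => ?_⟩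
  obtain ⟨⟨hlow, hup⟩, hn⟩ := hn₀ n hn
  have hN : (0 : ℝ) < n * (n + (l - 1 / 2) + (m - 1 / 2) + 1) := by
    have : (1 : ℝ) ≤ n := by exact_mod_cast hn
    nlinarith
  rw [(isGreatest_abs_mul_jacobiP_two_sq_sub_one (by linarith) hN _).csSup_eq]
  simp only [Real.norm_eq_abs, abs_mul, abs_of_nonneg (rpow_nonneg n.cast_nonneg _),
    abs_of_nonneg (le_max_of_le_left (abs_nonneg _))] at hlow hup
  exact ⟨hlow, hup⟩
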